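/- Fix μ ∈ (1,2). For every ε ∈ (0,1/2) there exists a function f = f_ε ∈ C²[ε,1] and positive constants c₁, c₂, c₃ depending only on μ (not on ε) such that: (1) f(z) ≥ 0 and f'(z) ≥ 0 on [ε,1]; (2) f(ε)=0, f(2ε) ≥ c₁, f(1)=1; (3) f(z) ≤ c₂ f'(z) z^{2-μ} and -f''(z) ≤ c₃ f'(z) z^{-μ} for all z ∈ [ε,1]. -/

import Mathlib

/-!
Rather than the piecewise profile of the paper, take `f = g / g(1)` for the smooth function
`g(z) = (z^(μ-1) - ε^(μ-1))/(μ-1) + 1 - ε/z`, whose derivative is `g'(z) = z^(μ-2) + ε/z²`.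
The term `ε/z` gives `g(ε) = 0` and `g(2ε) ≥ 1/2`. On `(0,1]` we have `g ≤ μ/(μ-1)` and
`g' z^(2-μ) ≥ z^(μ-2) z^(2-μ) = 1`, and `-g'' ≤ 2g'/z ≤ 2g' z^(-μ)`. None of these bounds
involves `ε`, and `g(1) ≤ μ/(μ-1)` keeps `f(2ε)` bounded below.
-/

open Set

namespace Profile

variable (μ ε : ℝ) {z : ℝ}

noncomputable def g (z : ℝ) : ℝ := (z ^ (μ - 1) - ε ^ (μ - 1)) / (μ - 1) + 1 - ε / z

noncomputable def g' (z : ℝ) : ℝ := z ^ (μ - 2) + ε / z ^ 2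

noncomputable def g'' (z : ℝ) : ℝ := (μ - 2) * z ^ (μ - 3) - 2 * ε / z ^ 3

theorem hasDerivAt_g (hμ : μ ≠ 1) (hz : z ≠ 0) : HasDerivAt (g μ ε) (g' μ ε z) z := by
  have hpow := Real.hasDerivAt_rpow_const (p := μ - 1) (Or.inl hz)
  have hinv := (hasDerivAt_inv hz).const_mul ε
  have : μ - 1 ≠ 0 := sub_ne_zero.mpr hμ
  refine (((hpow.sub_const (ε ^ (μ - 1))).div_const (μ - 1)).add_const 1).sub hinv
    |>.congr_deriv ?_ |>.congr_of_eventuallyEq (.of_forall fun x => ?_)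
  · rw [g', show μ - 1 - 1 = μ - 2 by ring]
    field_simp
    ring
  · simp [g, div_eq_mul_inv]

theorem hasDerivAt_g' (hz : z ≠ 0) : HasDerivAt (g' μ ε) (g'' μ ε z) z := by
  have hpow := Real.hasDerivAt_rpow_const (p := μ - 2) (Or.inl hz)
  have hinv := ((hasDerivAt_pow 2 z).inv (pow_ne_zero 2 hz)).const_mul ε
  refine (hpow.add hinv).congr_deriv ?_ |>.congr_of_eventuallyEq (.of_forall fun x => ?_)
  · rw [g'', show μ - 2 - 1 = μ - 3 by ring]
    field_simp
    ring
  · simp [g', div_eq_mul_inv]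

theorem continuousOn_g'' : ContinuousOn (g'' μ ε) (Ioi 0) := by
  intro z hz
  have hz : z ≠ 0 := (mem_Ioi.mp hz).ne'
  apply ContinuousAt.continuousWithinAt
  unfold g''
  fun_prop (disch := first | exact hz | exact Or.inl hz | exact pow_ne_zero _ hz)

variable {μ ε}

theorem g_self (hε : ε ≠ 0) : g μ ε ε = 0 := by
  simp [g, div_self hε]

theorem one_sub_div_le_g (hμ : 1 < μ) (hε : 0 ≤ ε) (hεz : ε ≤ z) :
    1 - ε / z ≤ g μ ε z := by
  have : ε ^ (μ - 1) ≤ z ^ (μ - 1) := Real.rpow_le_rpow hε hεz (by linarith)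
  have : 0 ≤ (z ^ (μ - 1) - ε ^ (μ - 1)) / (μ - 1) := div_nonneg (by linarith) (by linarith)
  rw [g]
  linarith

theorem g_nonneg (hμ : 1 < μ) (hε : 0 ≤ ε) (hεz : ε ≤ z) : 0 ≤ g μ ε z := by
  have : ε / z ≤ 1 := div_le_one_of_le₀ hεz (hε.trans hεz)
  linarith [one_sub_div_le_g hμ hε hεz]

theorem g_pos (hμ : 1 < μ) (hε : 0 ≤ ε) (hεz : ε < z) : 0 < g μ ε z := by
  have : ε / z < 1 := (div_lt_one (hε.trans_lt hεz)).mpr hεz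
  linarith [one_sub_div_le_g hμ hε hεz.le]

theorem half_le_g_two_mul (hμ : 1 < μ) (hε : 0 < ε) : 1 / 2 ≤ g μ ε (2 * ε) := by
  have h := one_sub_div_le_g hμ hε.le (by linarith : ε ≤ 2 * ε)
  rwa [div_mul_cancel_right₀ hε.ne', show (1 : ℝ) - 2⁻¹ = 1 / 2 by norm_num] at h

theorem g_le (hμ : 1 < μ) (hε : 0 ≤ ε) (hz : 0 < z) (hz1 : z ≤ 1) :
    g μ ε z ≤ μ / (μ - 1) := by
  have : z ^ (μ - 1) ≤ 1 := Real.rpow_le_one hz.le hz1 (by linarith)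
  have : (z ^ (μ - 1) - ε ^ (μ - 1)) / (μ - 1) ≤ 1 / (μ - 1) :=
    div_le_div_of_nonneg_right (by linarith [Real.rpow_nonneg hε (μ - 1)]) (by linarith)
  have : 0 ≤ ε / z := div_nonneg hε hz.le
  have : μ / (μ - 1) = 1 / (μ - 1) + 1 := by field_simp [(by linarith : μ - 1 ≠ 0)]; ring
  rw [g]
  linarith

theorem g'_nonneg (hε : 0 ≤ ε) (hz : 0 < z) : 0 ≤ g' μ ε z := by
  unfold g'
  positivity

theorem one_le_g'_mul_rpow (hε : 0 ≤ ε) (hz : 0 < z) : 1 ≤ g' μ ε z * z ^ (2 - μ) := by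
  have hcancel : z ^ (μ - 2) * z ^ (2 - μ) = 1 := by
    rw [← Real.rpow_add hz, show μ - 2 + (2 - μ) = 0 by ring, Real.rpow_zero]
  have : 0 ≤ ε / z ^ 2 * z ^ (2 - μ) := by positivity
  rw [g', add_mul]
  linarith

theorem g_le_mul_g'_mul_rpow (hμ : 1 < μ) (hε : 0 ≤ ε) (hz : 0 < z) (hz1 : z ≤ 1) :
    g μ ε z ≤ μ / (μ - 1) * g' μ ε z * z ^ (2 - μ) := by
  have : 0 ≤ μ / (μ - 1) := div_nonneg (by linarith) (by linarith)
  calc g μ ε z ≤ μ / (μ - 1) * 1 := by simpa using g_le hμ hε hz hz1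
    _ ≤ μ / (μ - 1) * (g' μ ε z * z ^ (2 - μ)) := by gcongr; exact one_le_g'_mul_rpow hε hz
    _ = _ := by ring

theorem neg_g''_le_div (hμ : 0 ≤ μ) (hz : 0 < z) : -g'' μ ε z ≤ 2 * g' μ ε z / z := by
  have : 0 ≤ μ * z ^ (μ - 2) / z := by positivity
  rw [g'', g', show μ - 3 = μ - 2 - 1 by ring, Real.rpow_sub_one hz.ne']
  have h : 2 * (z ^ (μ - 2) + ε / z ^ 2) / z
      = -((μ - 2) * (z ^ (μ - 2) / z) - 2 * ε / z ^ 3) + μ * z ^ (μ - 2) / z := by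
    field_simp
    ring
  linarith

theorem neg_g''_le_mul_g'_mul_rpow (hμ : 1 ≤ μ) (hε : 0 ≤ ε) (hz : 0 < z) (hz1 : z ≤ 1) :
    -g'' μ ε z ≤ 2 * g' μ ε z * z ^ (-μ) := by
  have hinv : z⁻¹ ≤ z ^ (-μ) := by
    rw [← Real.rpow_neg_one]
    exact Real.rpow_le_rpow_of_exponent_ge hz hz1 (by linarith)
  calc -g'' μ ε z ≤ 2 * g' μ ε z * z⁻¹ := by
        rw [← div_eq_mul_inv]; exact neg_g''_le_div (by linarith) hz
    _ ≤ 2 * g' μ ε z * z ^ (-μ) := by gcongr; linarith [g'_nonneg (μ := μ) hε hz]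

end Profile

open Profile in
/-- Lemma 3.2: for fixed `μ ∈ (1,2)` there are positive constants `c₁, c₂, c₃` (independent of
`ε`) such that for every `ε ∈ (0,1/2)` there is `f ∈ C²[ε,1]` (encoded by derivative functions
`f'`, `f''` with `f''` continuous on `[ε,1]`) with: `f ≥ 0`, `f' ≥ 0`; `f(ε) = 0`,
`f(2ε) ≥ c₁`, `f(1) = 1`; and `f(z) ≤ c₂ f'(z) z^{2-μ}`, `-f''(z) ≤ c₃ f'(z) z^{-μ}`
on `[ε,1]`. -/
theorem profile_exists (μ : ℝ) (hμ : μ ∈ Ioo (1:ℝ) 2) :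
    ∃ c₁ : ℝ, 0 < c₁ ∧ ∃ c₂ : ℝ, 0 < c₂ ∧ ∃ c₃ : ℝ, 0 < c₃ ∧
    ∀ ε ∈ Ioo (0:ℝ) (1/2),
    ∃ f f' f'' : ℝ → ℝ,
      (∀ z ∈ Icc ε 1, HasDerivWithinAt f (f' z) (Icc ε 1) z) ∧
      (∀ z ∈ Icc ε 1, HasDerivWithinAt f' (f'' z) (Icc ε 1) z) ∧
      ContinuousOn f'' (Icc ε 1) ∧
      (∀ z ∈ Icc ε 1, 0 ≤ f z ∧ 0 ≤ f' z) ∧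
      f ε = 0 ∧ c₁ ≤ f (2*ε) ∧ f 1 = 1 ∧
      (∀ z ∈ Icc ε 1,
        f z ≤ c₂ * f' z * z ^ (2 - μ) ∧ -(f'' z) ≤ c₃ * f' z * z ^ (-μ)) := by
  obtain ⟨hμ1, -⟩ := hμ
  have hc₂ : 0 < μ / (μ - 1) := div_pos (by linarith) (by linarith)
  refine ⟨1 / 2 / (μ / (μ - 1)), by positivity, μ / (μ - 1), hc₂, 2, two_pos, ?_⟩
  rintro ε ⟨hε, hε2⟩
  set G := g μ ε 1
  have hG : 0 < G := g_pos hμ1 hε.le (by linarith)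
  have hpos : ∀ z ∈ Icc ε 1, 0 < z := fun z hz => hε.trans_le hz.1
  refine ⟨fun z => g μ ε z / G, fun z => g' μ ε z / G, fun z => g'' μ ε z / G,
    fun z hz' => ((hasDerivAt_g μ ε hμ1.ne' (hpos z hz').ne').div_const G).hasDerivWithinAt,
    fun z hz' => ((hasDerivAt_g' μ ε (hpos z hz').ne').div_const G).hasDerivWithinAt,
    ((continuousOn_g'' μ ε).mono hpos).div_const G,
    fun z hz' => ⟨div_nonneg (g_nonneg hμ1 hε.le hz'.1) hG.le,
      div_nonneg (g'_nonneg hε.le (hpos z hz')) hG.le⟩,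
    by simp [g_self hε.ne'], ?_, div_self hG.ne', fun z hz' => ⟨?_, ?_⟩⟩
  · exact div_le_div₀ (by linarith [half_le_g_two_mul hμ1 hε]) (half_le_g_two_mul hμ1 hε) hG
      (g_le hμ1 hε.le one_pos le_rfl)
  · exact (div_le_div_of_nonneg_right (g_le_mul_g'_mul_rpow hμ1 hε.le (hpos z hz') hz'.2)
      hG.le).trans_eq (by ring)
  · rw [← neg_div]
    exact (div_le_div_of_nonneg_right (neg_g''_le_mul_g'_mul_rpow hμ1.le hε.le (hpos z hz') hz'.2)
      hG.le).trans_eq (by ring)
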